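/- arXiv:1711.00312 — 4 statements merged into one kernel-verified Lean document; each statement's English description precedes it below -/
import Mathlib

section
/- If F₁ = 0 and F₂ = 0 are both equational constraints of a formula Φ (i.e., Φ implies each of them), and F₁, F₂ both have positive degree in x_r, then Res_{x_r}(F₁, F₂) = 0 is also an equational constraint of Φ: for any x ∈ ℝⁿ satisfying Φ, the resultant (a polynomial not involving x_r) vanishes at the projection of x. -/
/-- The Sylvester matrix of two polynomials `f`, `g` with respect to
(declared) degrees `m`, `n`: an `(m+n) × (m+n)` matrix. The first `n` rows
hold shifted coefficients of `f`, the remaining `m` rows those of `g`. -/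
noncomputable def sylvesterMatrix {R : Type*} [CommRing R]
    (f g : Polynomial R) (m n : ℕ) :
    Matrix (Fin (m + n)) (Fin (m + n)) R := fun i j =>
  if (i : ℕ) < n then
    (if (i : ℕ) ≤ (j : ℕ) ∧ (j : ℕ) ≤ (i : ℕ) + m then f.coeff (m + i - j) else 0)
  else
    (if (i : ℕ) - n ≤ (j : ℕ) ∧ (j : ℕ) ≤ ((i : ℕ) - n) + n
      then g.coeff (n + ((i : ℕ) - n) - j) else 0)

/-- The resultant of two polynomials: the determinant of their Sylvester
matrix, taken with respect to their natural degrees. -/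
noncomputable def resultant {R : Type*} [CommRing R] (f g : Polynomial R) : R :=
  (sylvesterMatrix f g f.natDegree g.natDegree).det

/-- A generic "row of the Sylvester matrix dotted with the power vector of a
common root vanishes" computation. -/
lemma rowsum_eq_zero (f : Polynomial ℝ) (t : ℝ) (m N s : ℕ)
    (hroot : f.eval t = 0) (hdeg : f.natDegree ≤ m) (hs : s + m < N) :
    ∑ j ∈ Finset.range N,
      (if s ≤ j ∧ j ≤ s + m then f.coeff (m + s - j) else 0) * t ^ (N - 1 - j) = 0 := by
  have step1 : ∀ j ∈ Finset.range N,
      (if s ≤ j ∧ j ≤ s + m then f.coeff (m + s - j) else 0) * t ^ (N - 1 - j)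
        = if j ∈ Finset.Icc s (s + m) then f.coeff (m + s - j) * t ^ (N - 1 - j) else 0 := by
    intro j _
    simp [Finset.mem_Icc, ite_mul]
  rw [Finset.sum_congr rfl step1, Finset.sum_ite_mem]
  have hsub : Finset.range N ∩ Finset.Icc s (s + m) = Finset.Icc s (s + m) := by
    apply Finset.inter_eq_right.mpr
    intro j hj
    simp only [Finset.mem_Icc] at hj
    simp only [Finset.mem_range]
    omega
  rw [hsub]
  have key : ∑ j ∈ Finset.Icc s (s + m), f.coeff (m + s - j) * t ^ (N - 1 - j)
      = ∑ d ∈ Finset.range (m + 1), f.coeff d * t ^ ((N - 1 - m - s) + d) := by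
    apply Finset.sum_nbij' (fun j => m + s - j) (fun d => m + s - d)
    · intro j hj; simp only [Finset.mem_Icc] at hj; simp only [Finset.mem_range]; omega
    · intro d hd; simp only [Finset.mem_range] at hd; simp only [Finset.mem_Icc]; omega
    · intro j hj; simp only [Finset.mem_Icc] at hj; omega
    · intro d hd; simp only [Finset.mem_range] at hd; omega
    · intro j hj
      simp only [Finset.mem_Icc] at hj
      rw [show N - 1 - j = N - 1 - m - s + (m + s - j) from by omega]
  rw [key]
  have factor : ∑ d ∈ Finset.range (m + 1), f.coeff d * t ^ ((N - 1 - m - s) + d)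
      = t ^ (N - 1 - m - s) * ∑ d ∈ Finset.range (m + 1), f.coeff d * t ^ d := by
    rw [Finset.mul_sum]
    apply Finset.sum_congr rfl
    intro d _
    rw [pow_add]; ring
  rw [factor, ← Polynomial.eval_eq_sum_range' (Nat.lt_succ_of_le hdeg), hroot, mul_zero]

/-- Propagation of equational constraints: if F₁ = 0 and F₂ = 0 are both
implied by Φ and have positive degree in the last variable x_r, then
Res_{x_r}(F₁,F₂) = 0 is also implied by Φ: it vanishes at the projection of
any point satisfying Φ. -/
theorem resultant_equational_constraint {k : ℕ}
    (F₁ F₂ : Polynomial (MvPolynomial (Fin k) ℝ))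
    (hd₁ : 0 < F₁.natDegree) (hd₂ : 0 < F₂.natDegree)
    (Φ : ((Fin k → ℝ) × ℝ) → Prop)
    (h₁ : ∀ p, Φ p → Polynomial.eval p.2 (F₁.map (MvPolynomial.eval p.1)) = 0)
    (h₂ : ∀ p, Φ p → Polynomial.eval p.2 (F₂.map (MvPolynomial.eval p.1)) = 0) :
    ∀ p, Φ p → MvPolynomial.eval p.1 (resultant F₁ F₂) = 0 := by
  intro p hp
  have hφ : MvPolynomial.eval p.1 (resultant F₁ F₂)
      = (sylvesterMatrix (F₁.map (MvPolynomial.eval p.1)) (F₂.map (MvPolynomial.eval p.1))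
          F₁.natDegree F₂.natDegree).det := by
    rw [resultant, RingHom.map_det]
    congr 1
    ext i j
    simp only [RingHom.mapMatrix_apply, Matrix.map_apply, sylvesterMatrix,
      apply_ite (MvPolynomial.eval p.1), map_zero, Polynomial.coeff_map]
  rw [hφ]
  set m := F₁.natDegree with hm
  set n := F₂.natDegree with hn
  set f := F₁.map (MvPolynomial.eval p.1) with hf
  set g := F₂.map (MvPolynomial.eval p.1) with hg
  have hfd : f.natDegree ≤ m := Polynomial.natDegree_map_le
  have hgd : g.natDegree ≤ n := Polynomial.natDegree_map_le
  have hfr : f.eval p.2 = 0 := h₁ p hp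
  have hgr : g.eval p.2 = 0 := h₂ p hp
  apply Matrix.exists_mulVec_eq_zero_iff.mp
  refine ⟨fun j => p.2 ^ (m + n - 1 - (j : ℕ)), ?_, ?_⟩
  · intro h0
    have hlt : m + n - 1 < m + n := by omega
    have := congrFun h0 ⟨m + n - 1, hlt⟩
    simp only [Pi.zero_apply] at this
    rw [show m + n - 1 - ((⟨m + n - 1, hlt⟩ : Fin (m + n)) : ℕ) = 0 from by simp] at this
    simp at this
  · funext i
    show ∑ j, sylvesterMatrix f g m n i j * p.2 ^ (m + n - 1 - (j : ℕ)) = 0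
    simp only [sylvesterMatrix]
    by_cases hi : (i : ℕ) < n
    · simp only [if_pos hi]
      rw [Fin.sum_univ_eq_sum_range
        (fun j => (if (i : ℕ) ≤ j ∧ j ≤ (i : ℕ) + m then f.coeff (m + (i : ℕ) - j) else 0)
          * p.2 ^ (m + n - 1 - j))]
      exact rowsum_eq_zero f p.2 m (m + n) (i : ℕ) hfr hfd (by omega)
    · simp only [if_neg hi]
      rw [Fin.sum_univ_eq_sum_range
        (fun j => (if (i : ℕ) - n ≤ j ∧ j ≤ ((i : ℕ) - n) + n then g.coeff (n + ((i : ℕ) - n) - j) else 0)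
          * p.2 ^ (m + n - 1 - j))]
      have : ∑ j ∈ Finset.range (m + n),
          (if (i : ℕ) - n ≤ j ∧ j ≤ ((i : ℕ) - n) + n then g.coeff (n + ((i : ℕ) - n) - j) else 0)
            * p.2 ^ (m + n - 1 - j) = 0 := by
        have := rowsum_eq_zero g p.2 n (n + m) ((i : ℕ) - n) hgr hgd (by omega)
        rw [Nat.add_comm n m] at this
        exact this
      exact this
end

section
/- Let Φ ≡ (f₁ = 0 ∧ φ₁) ∨ ... ∨ (f_k = 0 ∧ φ_k) and let C ⊆ ℝⁿ be a set on which every f_i is sign-invariant and, for each i such that f_i vanishes identically on C, every polynomial of φ_i is sign-invariant on C. Then Φ has constant truth value on C. -/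
/-- A function is sign-invariant on a set if it is everywhere positive,
everywhere negative, or everywhere zero there. -/
def SignInvariantOn {α : Type*} (f : α → ℝ) (C : Set α) : Prop :=
  (∀ x ∈ C, 0 < f x) ∨ (∀ x ∈ C, f x < 0) ∨ (∀ x ∈ C, f x = 0)

/-- TTICAD soundness: for Φ ≡ ⋁ᵢ (fᵢ = 0 ∧ φᵢ), if every fᵢ is sign-invariant
on C and, for each i such that fᵢ vanishes identically on C, every polynomial
of φᵢ (a Boolean combination of sign conditions on the polynomials ps i) is
sign-invariant on C, then Φ has constant truth value on C. -/
theorem tticad_truth_invariant {n k : ℕ} {m : Fin k → ℕ}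
    (f : Fin k → MvPolynomial (Fin n) ℝ)
    (ps : ∀ i : Fin k, Fin (m i) → MvPolynomial (Fin n) ℝ)
    (φ : Fin k → (Fin n → ℝ) → Prop)
    (hφ : ∀ i, ∀ x y : Fin n → ℝ,
      (∀ j, SignType.sign (MvPolynomial.eval x (ps i j)) =
            SignType.sign (MvPolynomial.eval y (ps i j))) → (φ i x ↔ φ i y))
    (C : Set (Fin n → ℝ))
    (hf : ∀ i, SignInvariantOn (fun x => MvPolynomial.eval x (f i)) C)
    (hps : ∀ i, (∀ x ∈ C, MvPolynomial.eval x (f i) = 0) →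
      ∀ j, SignInvariantOn (fun x => MvPolynomial.eval x (ps i j)) C) :
    (∀ x ∈ C, ∃ i, MvPolynomial.eval x (f i) = 0 ∧ φ i x) ∨
    (∀ x ∈ C, ¬ ∃ i, MvPolynomial.eval x (f i) = 0 ∧ φ i x) := by
  by_cases h : ∃ x ∈ C, ∃ i, MvPolynomial.eval x (f i) = 0 ∧ φ i x
  · left
    obtain ⟨x, hxC, i, hfx, hφx⟩ := h
    -- f i is zero on C
    have hf0 : ∀ z ∈ C, MvPolynomial.eval z (f i) = 0 := by
      rcases hf i with h1 | h2 | h3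
      · exact absurd (h1 x hxC) (by simp [hfx])
      · exact absurd (h2 x hxC) (by simp [hfx])
      · exact h3
    have hsign := hps i hf0
    intro y hyC
    refine ⟨i, hf0 y hyC, ?_⟩
    refine (hφ i y x ?_).mpr hφx
    intro j
    rcases hsign j with h1 | h2 | h3
    · rw [show SignType.sign (MvPolynomial.eval y (ps i j)) = 1 from sign_pos (h1 y hyC),
        show SignType.sign (MvPolynomial.eval x (ps i j)) = 1 from sign_pos (h1 x hxC)]
    · rw [show SignType.sign (MvPolynomial.eval y (ps i j)) = -1 from sign_neg (h2 y hyC),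
        show SignType.sign (MvPolynomial.eval x (ps i j)) = -1 from sign_neg (h2 x hxC)]
    · rw [show MvPolynomial.eval y (ps i j) = 0 from h3 y hyC,
        show MvPolynomial.eval x (ps i j) = 0 from h3 x hxC]
  · right
    intro x hxC hx
    exact h ⟨x, hxC, hx⟩
end

section
/- Combining the above: let f, g be polynomials of positive degree in x_r, S ⊆ ℝ^{r-1} connected, f delineable over S with leading coefficient (in x_r) of f and of g nonvanishing on S, and suppose Res_{x_r}(f,g) has no zero on S. Then for each section σ of f over S, g is sign-invariant on σ. -/
open Polynomial Finset in
lemma row_sum_zero {t : ℝ} (p : Polynomial ℝ) (d a N : ℕ)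
    (hd : p.natDegree ≤ d) (ha : a + d < N) (hp : p.eval t = 0) :
    ∑ j ∈ Finset.range N,
      (if a ≤ j ∧ j ≤ a + d then p.coeff (d + a - j) else 0) * t ^ (N - 1 - j) = 0 := by
  have h1 : ∀ j ∈ Finset.range N,
      (if a ≤ j ∧ j ≤ a + d then p.coeff (d + a - j) else 0) * t ^ (N - 1 - j)
        = if a ≤ j ∧ j ≤ a + d then p.coeff (d + a - j) * t ^ (N - 1 - j) else 0 := by
    intro j _; split <;> simp
  rw [Finset.sum_congr rfl h1, ← Finset.sum_filter]
  have h2 : (Finset.range N).filter (fun j => a ≤ j ∧ j ≤ a + d) = Finset.Icc a (a + d) := by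
    ext j; simp only [Finset.mem_filter, Finset.mem_range, Finset.mem_Icc]; omega
  rw [h2]
  have h3 : ∑ j ∈ Finset.Icc a (a + d), p.coeff (d + a - j) * t ^ (N - 1 - j)
      = ∑ l ∈ Finset.range (d + 1), p.coeff l * (t ^ (N - 1 - (a + d)) * t ^ l) := by
    apply Finset.sum_nbij' (i := fun j => d + a - j) (j := fun l => d + a - l)
    · intro j hj; simp only [Finset.mem_Icc] at hj; simp only [Finset.mem_range]; omega
    · intro l hl; simp only [Finset.mem_range] at hl; simp only [Finset.mem_Icc]; omega
    · intro j hj; simp only [Finset.mem_Icc] at hj; omega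
    · intro l hl; simp only [Finset.mem_range] at hl; omega
    · intro j hj; simp only [Finset.mem_Icc] at hj
      congr 1
      rw [← pow_add]
      congr 1
      omega
  rw [h3]
  have h4 : ∑ l ∈ Finset.range (d + 1), p.coeff l * (t ^ (N - 1 - (a + d)) * t ^ l)
      = t ^ (N - 1 - (a + d)) * ∑ l ∈ Finset.range (d + 1), p.coeff l * t ^ l := by
    rw [Finset.mul_sum]; apply Finset.sum_congr rfl; intro l _; ring
  rw [h4, ← Polynomial.eval_eq_sum_range' (Nat.lt_succ_of_le hd), hp, mul_zero]

lemma det_sylvester_eq_zero (F G : Polynomial ℝ) (m n : ℕ)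
    (hm : F.natDegree ≤ m) (hn : G.natDegree ≤ n) (hmn : 0 < m + n) (t : ℝ)
    (hF : F.eval t = 0) (hG : G.eval t = 0) :
    (sylvesterMatrix F G m n).det = 0 := by
  rw [← Matrix.exists_mulVec_eq_zero_iff]
  refine ⟨fun j => t ^ (m + n - 1 - (j : ℕ)), ?_, ?_⟩
  · intro h
    have := congrFun h ⟨m + n - 1, by omega⟩
    simp only [Pi.zero_apply] at this
    rw [show m + n - 1 - (m + n - 1) = 0 by omega, pow_zero] at this
    exact one_ne_zero this
  · funext i
    simp only [Matrix.mulVec, dotProduct, Pi.zero_apply, sylvesterMatrix]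
    rw [Fin.sum_univ_eq_sum_range (fun j =>
      (if (i : ℕ) < n then
        (if (i : ℕ) ≤ j ∧ j ≤ (i : ℕ) + m then F.coeff (m + i - j) else 0)
      else
        (if (i : ℕ) - n ≤ j ∧ j ≤ ((i : ℕ) - n) + n then G.coeff (n + ((i : ℕ) - n) - j) else 0))
        * t ^ (m + n - 1 - j)) (m + n)]
    by_cases hi : (i : ℕ) < n
    · simp only [hi, if_true]
      exact row_sum_zero F m (i : ℕ) (m + n) hm (by omega) hF
    · simp only [hi, if_false]
      have hi2 : (i : ℕ) < m + n := i.isLt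
      exact row_sum_zero G n ((i : ℕ) - n) (m + n) hn (by omega) hG

lemma sylvesterMatrix_map {R S : Type*} [CommRing R] [CommRing S] (φ : R →+* S)
    (f g : Polynomial R) (m n : ℕ) :
    (sylvesterMatrix f g m n).map φ = sylvesterMatrix (f.map φ) (g.map φ) m n := by
  ext i j
  simp only [Matrix.map_apply, sylvesterMatrix, Polynomial.coeff_map]
  split <;> split <;> simp

lemma map_resultant {R S : Type*} [CommRing R] [CommRing S] (φ : R →+* S)
    (f g : Polynomial R) (hf : φ f.leadingCoeff ≠ 0) (hg : φ g.leadingCoeff ≠ 0) :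
    φ (resultant f g) = resultant (f.map φ) (g.map φ) := by
  have h1 : (f.map φ).natDegree = f.natDegree :=
    Polynomial.natDegree_map_of_leadingCoeff_ne_zero φ hf
  have h2 : (g.map φ).natDegree = g.natDegree :=
    Polynomial.natDegree_map_of_leadingCoeff_ne_zero φ hg
  have : resultant (f.map φ) (g.map φ)
      = (sylvesterMatrix (f.map φ) (g.map φ) f.natDegree g.natDegree).det := by
    unfold resultant; rw [h1, h2]
  rw [this, ← sylvesterMatrix_map]
  exact RingHom.map_det φ _

/-- Simplified McCallum Theorem 2.2: if f, g have positive degree in x_r,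
f is delineable over the connected set S with the leading coefficients of f
and g nonvanishing on S, and Res_{x_r}(f,g) has no zero on S, then g is
sign-invariant on each section of f over S. -/
theorem mccallum_sign_invariant {k m : ℕ}
    (f g : Polynomial (MvPolynomial (Fin k) ℝ))
    (hdf : 0 < f.natDegree) (hdg : 0 < g.natDegree)
    (S : Set (Fin k → ℝ)) (hS : IsConnected S)
    (θ : Fin m → (Fin k → ℝ) → ℝ)
    (hcont : ∀ i, ContinuousOn (θ i) S)
    (hord : ∀ α ∈ S, StrictMono fun i => θ i α)
    (hroots : ∀ α ∈ S, ∀ t : ℝ,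
      Polynomial.eval t (f.map (MvPolynomial.eval α)) = 0 ↔ ∃ i, t = θ i α)
    (hlcf : ∀ α ∈ S, MvPolynomial.eval α f.leadingCoeff ≠ 0)
    (hlcg : ∀ α ∈ S, MvPolynomial.eval α g.leadingCoeff ≠ 0)
    (hres : ∀ α ∈ S, MvPolynomial.eval α (resultant f g) ≠ 0) :
    ∀ i,
      (∀ p ∈ {p : (Fin k → ℝ) × ℝ | p.1 ∈ S ∧ p.2 = θ i p.1},
        0 < Polynomial.eval p.2 (g.map (MvPolynomial.eval p.1))) ∨
      (∀ p ∈ {p : (Fin k → ℝ) × ℝ | p.1 ∈ S ∧ p.2 = θ i p.1},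
        Polynomial.eval p.2 (g.map (MvPolynomial.eval p.1)) < 0) := by
  intro i
  set h : (Fin k → ℝ) → ℝ :=
    fun α => Polynomial.eval (θ i α) (g.map (MvPolynomial.eval α)) with hh
  -- h is nonzero on S
  have hne : ∀ α ∈ S, h α ≠ 0 := by
    intro α hα h0
    apply hres α hα
    have hF : Polynomial.eval (θ i α) (f.map (MvPolynomial.eval α)) = 0 :=
      (hroots α hα (θ i α)).mpr ⟨i, rfl⟩
    have hdFle : (f.map (MvPolynomial.eval α)).natDegree ≤ f.natDegree :=
      Polynomial.natDegree_map_le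
    have hdGle : (g.map (MvPolynomial.eval α)).natDegree ≤ g.natDegree :=
      Polynomial.natDegree_map_le
    rw [map_resultant (MvPolynomial.eval α) f g (hlcf α hα) (hlcg α hα)]
    have h1 : (f.map (MvPolynomial.eval α)).natDegree = f.natDegree :=
      Polynomial.natDegree_map_of_leadingCoeff_ne_zero _ (hlcf α hα)
    have h2 : (g.map (MvPolynomial.eval α)).natDegree = g.natDegree :=
      Polynomial.natDegree_map_of_leadingCoeff_ne_zero _ (hlcg α hα)
    have : resultant (f.map (MvPolynomial.eval α)) (g.map (MvPolynomial.eval α))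
        = (sylvesterMatrix (f.map (MvPolynomial.eval α)) (g.map (MvPolynomial.eval α))
            f.natDegree g.natDegree).det := by
      unfold resultant; rw [h1, h2]
    rw [this]
    exact det_sylvester_eq_zero _ _ _ _ hdFle hdGle (by omega) (θ i α) hF h0
  -- h is continuous on S
  have hCont : ContinuousOn h S := by
    have heq : ∀ α, h α = ∑ j ∈ Finset.range (g.natDegree + 1),
        MvPolynomial.eval α (g.coeff j) * (θ i α) ^ j := by
      intro α
      show Polynomial.eval (θ i α) (Polynomial.map (MvPolynomial.eval α) g) = _
      rw [Polynomial.eval_eq_sum_range' (Nat.lt_succ_of_le (Polynomial.natDegree_map_le))]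
      exact Finset.sum_congr rfl fun j _ => by rw [Polynomial.coeff_map]
    have : ContinuousOn (fun α => ∑ j ∈ Finset.range (g.natDegree + 1),
        MvPolynomial.eval α (g.coeff j) * (θ i α) ^ j) S := by
      apply continuousOn_finset_sum
      intro j _
      exact ((MvPolynomial.continuous_eval (g.coeff j)).continuousOn).mul ((hcont i).pow j)
    exact this.congr fun α _ => heq α
  -- sign invariance via connectedness
  suffices H : (∀ α ∈ S, 0 < h α) ∨ (∀ α ∈ S, h α < 0) by
    rcases H with H | H
    · left; intro p hp; rw [hp.2]; exact H p.1 hp.1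
    · right; intro p hp; rw [hp.2]; exact H p.1 hp.1
  by_contra hcon
  push_neg at hcon
  obtain ⟨⟨α, hα, hα2⟩, ⟨β, hβ, hβ2⟩⟩ := hcon
  have : (0 : ℝ) ∈ Set.Icc (h α) (h β) := ⟨hα2, hβ2⟩
  obtain ⟨γ, hγ, hγ0⟩ := hS.isPreconnected.intermediate_value hα hβ hCont this
  exact hne γ hγ hγ0
end

section
/- For a quantifier-free formula Φ in variables x₁,...,xₙ and a point a ∈ ℝᵏ (k < n), if D is a finite partition of ℝⁿ into cells on each of which Φ has constant truth value, and D induces a partition of ℝᵏ by projection (cylindricity), then the truth value of ∃x_{k+1}...∃xₙ Φ(a, x_{k+1},...,xₙ) is constant as a ranges over any induced cell in ℝᵏ. -/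
/-- Quantifier elimination over a cylindrical decomposition: if D partitions
ℝᵏ × ℝˡ into cells on which Φ has constant truth value, and the projections of
any two cells to ℝᵏ are identical or disjoint, then the truth of
∃ b, Φ(a, b) is constant as a ranges over any induced projected cell. -/
theorem cylindrical_quantifier_elimination {k l c : ℕ}
    (Φ : ((Fin k → ℝ) × (Fin l → ℝ)) → Prop)
    (D : Fin c → Set ((Fin k → ℝ) × (Fin l → ℝ)))
    (hcover : (⋃ i, D i) = Set.univ)
    (hdisj : Pairwise fun i j => Disjoint (D i) (D j))
    (htruth : ∀ i, (∀ p ∈ D i, Φ p) ∨ (∀ p ∈ D i, ¬ Φ p))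
    (hcyl : ∀ i j, Prod.fst '' D i = Prod.fst '' D j ∨
      Disjoint (Prod.fst '' D i) (Prod.fst '' D j)) :
    ∀ i, (∀ a ∈ Prod.fst '' D i, ∃ b, Φ (a, b)) ∨
         (∀ a ∈ Prod.fst '' D i, ¬ ∃ b, Φ (a, b)) := by
  intro i
  by_contra h
  push_neg at h
  obtain ⟨⟨a₁, ha₁, hne⟩, a₂, ha₂, b₂, hΦ₂⟩ := h
  -- find the cell containing (a₂, b₂)
  have hmem : (a₂, b₂) ∈ ⋃ i, D i := by rw [hcover]; trivial
  obtain ⟨_, ⟨j, rfl⟩, hj⟩ := hmem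
  -- on D j, Φ holds everywhere
  have hall : ∀ p ∈ D j, Φ p := by
    rcases htruth j with h1 | h2
    · exact h1
    · exact absurd hΦ₂ (h2 _ hj)
  -- projections of D i and D j agree (both contain a₂)
  have ha₂j : a₂ ∈ Prod.fst '' D j := ⟨(a₂, b₂), hj, rfl⟩
  have hproj : Prod.fst '' D i = Prod.fst '' D j := by
    rcases hcyl i j with h | h
    · exact h
    · exact absurd (h.ne_of_mem ha₂ ha₂j) (fun hn => hn rfl)
  -- so a₁ ∈ proj D j, giving a witness where Φ holds
  rw [hproj] at ha₁
  obtain ⟨p, hp, hpfst⟩ := ha₁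
  exact hne p.2 (by rw [← hpfst]; simpa using hall p hp)
end
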